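/- arXiv:0906.3427 — 4 statements merged into one kernel-verified Lean document; each statement's English description precedes it below -/
import Mathlib

section
/- For every finite graph G with at least one vertex, χ(G) ≤ χ_s(G) ≤ χ_l(G) ≤ 2χ(G) − 1, where χ(G) is the chromatic number of G. -/
/-- The Kneser graph `KG(n,k)`: vertices are the `k`-element subsets of an
`n`-element set, two vertices being adjacent iff they are disjoint. -/
def kneserGraph (n k : ℕ) : SimpleGraph {A : Finset (Fin n) // A.card = k} where
  Adj A B := A ≠ B ∧ Disjoint (A : Finset (Fin n)) (B : Finset (Fin n))
  symm := ⟨fun A B h => ⟨h.1.symm, h.2.symm⟩⟩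
  loopless := ⟨fun A h => h.1 rfl⟩

/-- A star-free coloring: a proper coloring by positive integers such that no
path on three vertices is colored using only two consecutive integers. -/
def IsStarFreeColoring {V : Type*} (G : SimpleGraph V) (c : V → ℕ) : Prop :=
  (∀ v, 1 ≤ c v) ∧
  (∀ u v, G.Adj u v → c u ≠ c v) ∧
  (∀ v u w, u ≠ w → G.Adj v u → G.Adj v w →
    ¬ ∃ a : ℕ, ({c u, c v, c w} : Set ℕ) ⊆ {a, a + 1})

/-- The star-free chromatic number: the least positive integer `t` such that `G`
admits a star-free coloring with colors in `{1, …, t}`. -/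
noncomputable def starFreeChromaticNumber {V : Type*} (G : SimpleGraph V) : ℕ :=
  sInf {t : ℕ | 0 < t ∧ ∃ c : V → ℕ, IsStarFreeColoring G c ∧ ∀ v, c v ∈ Set.Icc 1 t}

/-- A local coloring: a proper coloring by positive integers such that no path on
three vertices is colored using only two consecutive integers and no triangle is
colored using only three consecutive integers. -/
def IsLocalColoring {V : Type*} (G : SimpleGraph V) (c : V → ℕ) : Prop :=
  IsStarFreeColoring G c ∧
  (∀ u v w, G.Adj u v → G.Adj v w → G.Adj u w →
    ¬ ∃ a : ℕ, ({c u, c v, c w} : Set ℕ) ⊆ {a, a + 1, a + 2})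

/-- The local chromatic number: the minimum value (maximum color used) over all
local colorings of `G`. -/
noncomputable def localChromaticNumber {V : Type*} (G : SimpleGraph V) : ℕ :=
  sInf {t : ℕ | 0 < t ∧ ∃ c : V → ℕ, IsLocalColoring G c ∧ ∀ v, c v ∈ Set.Icc 1 t}

/-!
Lower bounds: a local coloring is star-free, and shifting a star-free coloring with colors
in `{1, …, t}` down by one gives a proper coloring with `t` colors. Upper bound: doubling a
proper coloring with colors `0, …, n - 1` and adding one gives odd colors `1, …, 2n - 1`;
adjacent vertices then differ by at least `2`, which rules out both a two-colored path in
`{a, a + 1}` and a triangle in `{a, a + 1, a + 2}`.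
-/

section

variable {V : Type*} {G : SimpleGraph V} {c : V → ℕ} {t : ℕ}

theorem isLocalColoring_of_odd (hodd : ∀ v, Odd (c v))
    (hproper : ∀ u v, G.Adj u v → c u ≠ c v) : IsLocalColoring G c := by
  refine ⟨⟨fun v => (hodd v).pos, hproper, ?_⟩, ?_⟩
  · rintro v u w - hvu - ⟨a, hsub⟩
    obtain ⟨ku, hku⟩ := hodd u
    obtain ⟨kv, hkv⟩ := hodd v
    have hu : c u ∈ ({a, a + 1} : Set ℕ) := hsub (by simp)
    have hv : c v ∈ ({a, a + 1} : Set ℕ) := hsub (by simp)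
    have := hproper v u hvu
    simp only [Set.mem_insert_iff, Set.mem_singleton_iff] at hu hv
    omega
  · rintro u v w huv hvw huw ⟨a, hsub⟩
    obtain ⟨ku, hku⟩ := hodd u
    obtain ⟨kv, hkv⟩ := hodd v
    obtain ⟨kw, hkw⟩ := hodd w
    have hu : c u ∈ ({a, a + 1, a + 2} : Set ℕ) := hsub (by simp)
    have hv : c v ∈ ({a, a + 1, a + 2} : Set ℕ) := hsub (by simp)
    have hw : c w ∈ ({a, a + 1, a + 2} : Set ℕ) := hsub (by simp)
    have := hproper u v huv
    have := hproper v w hvw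
    have := hproper u w huw
    simp only [Set.mem_insert_iff, Set.mem_singleton_iff] at hu hv hw
    omega

theorem SimpleGraph.Colorable.exists_isLocalColoring {n : ℕ} (hn : G.Colorable n) :
    ∃ c : V → ℕ, IsLocalColoring G c ∧ ∀ v, c v ∈ Set.Icc 1 (2 * n - 1) := by
  obtain ⟨C, hC⟩ := (SimpleGraph.colorable_iff_exists_bdd_nat_coloring n).1 hn
  refine ⟨fun v => 2 * C v + 1, isLocalColoring_of_odd (fun v => odd_two_mul_add_one _) ?_,
    fun v => show 1 ≤ 2 * C v + 1 ∧ 2 * C v + 1 ≤ 2 * n - 1 by have := hC v; omega⟩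
  intro u v huv heq
  exact C.valid huv (by omega)

theorem IsStarFreeColoring.colorable (hc : IsStarFreeColoring G c)
    (hct : ∀ v, c v ∈ Set.Icc 1 t) : G.Colorable t := by
  refine (SimpleGraph.colorable_iff_exists_bdd_nat_coloring t).2
    ⟨.mk (fun v => c v - 1) fun {u v} huv heq => hc.2.1 u v huv ?_,
      fun v => show c v - 1 < t by have := hct v; simp only [Set.mem_Icc] at this; omega⟩
  have := hc.1 u
  have := hc.1 v
  omega

theorem IsStarFreeColoring.chromaticNumber_le_starFreeChromaticNumber
    (hc : IsStarFreeColoring G c) (ht : 0 < t) (hct : ∀ v, c v ∈ Set.Icc 1 t) :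
    G.chromaticNumber ≤ starFreeChromaticNumber G := by
  obtain ⟨-, d, hd, hdt⟩ := Nat.sInf_mem (⟨t, ht, c, hc, hct⟩ :
    {t : ℕ | 0 < t ∧ ∃ c : V → ℕ, IsStarFreeColoring G c ∧ ∀ v, c v ∈ Set.Icc 1 t}.Nonempty)
  exact (hd.colorable hdt).chromaticNumber_le

theorem IsLocalColoring.starFreeChromaticNumber_le_localChromaticNumber
    (hc : IsLocalColoring G c) (ht : 0 < t) (hct : ∀ v, c v ∈ Set.Icc 1 t) :
    starFreeChromaticNumber G ≤ localChromaticNumber G := by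
  obtain ⟨hpos, d, hd, hdt⟩ := Nat.sInf_mem (⟨t, ht, c, hc, hct⟩ :
    {t : ℕ | 0 < t ∧ ∃ c : V → ℕ, IsLocalColoring G c ∧ ∀ v, c v ∈ Set.Icc 1 t}.Nonempty)
  exact Nat.sInf_le ⟨hpos, d, hd.1, hdt⟩

theorem IsLocalColoring.localChromaticNumber_le (hc : IsLocalColoring G c) (ht : 0 < t)
    (hct : ∀ v, c v ∈ Set.Icc 1 t) : localChromaticNumber G ≤ t :=
  Nat.sInf_le ⟨ht, c, hc, hct⟩

end

/-- For every finite graph `G` with at least one vertex,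
`χ(G) ≤ χₛ(G) ≤ χₗ(G) ≤ 2χ(G) − 1`. -/
theorem chromatic_le_starFree_le_local_le (V : Type*) [Fintype V] [Nonempty V]
    (G : SimpleGraph V) :
    G.chromaticNumber ≤ (starFreeChromaticNumber G : ℕ∞) ∧
    starFreeChromaticNumber G ≤ localChromaticNumber G ∧
    (localChromaticNumber G : ℕ∞) ≤ 2 * G.chromaticNumber - 1 := by
  obtain ⟨n, hn⟩ := ENat.ne_top_iff_exists.1
    (SimpleGraph.chromaticNumber_ne_top_iff_exists.2 ⟨_, G.colorable_of_fintype⟩)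
  have hcol : G.Colorable n := SimpleGraph.chromaticNumber_le_iff_colorable.1 hn.ge
  have hpos : 0 < 2 * n - 1 := by
    have := hcol.chromaticNumber_pos
    rw [← hn, Nat.cast_pos] at this
    omega
  obtain ⟨c, hc, hct⟩ := hcol.exists_isLocalColoring
  refine ⟨hc.1.chromaticNumber_le_starFreeChromaticNumber hpos hct,
    hc.starFreeChromaticNumber_le_localChromaticNumber hpos hct, ?_⟩
  calc (localChromaticNumber G : ℕ∞) ≤ (2 * n - 1 : ℕ) := by
        exact_mod_cast hc.localChromaticNumber_le hpos hct
    _ = 2 * G.chromaticNumber - 1 := by rw [ENat.natCast_sub, ← hn]; rfl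
end

section
/- Let n and k be positive integers with n − 1 ≥ 2k ≥ 4. Then χ_s(KG(n,k)) ≤ χ_s(KG(n−1,k)) + 2; that is, any star-free coloring of KG(n−1,k) with colors in {1,…,t} can be extended to a star-free coloring of KG(n,k) with colors in {1,…,t+2}. -/
/-- The canonical identification of the vertices of `KG(n−1,k)` with the
`k`-subsets of `{1, …, n−1}` inside `KG(n,k)`. -/
def kneserVertexEmb (n k : ℕ) (A : {A : Finset (Fin (n - 1)) // A.card = k}) :
    {A : Finset (Fin n) // A.card = k} :=
  ⟨(A : Finset (Fin (n - 1))).map ⟨Fin.castLE (Nat.sub_le n 1), Fin.castLE_injective _⟩,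
    by simpa using A.2⟩


/-!
The `k`-subsets of `Fin n` containing the last point pairwise intersect, so they form an
independent set of `KG(n,k)` whose complement induces `KG(n-1,k)`. Colour all of them `t + 2`:
every edge leaving this set joins the colour `t + 2` to a colour at most `t`, so a path on three
vertices coloured by two consecutive integers would have to lie inside `KG(n-1,k)`.
-/

section StarFree

variable {V W : Type*} {G : SimpleGraph V} {H : SimpleGraph W}

lemma mem_consecutive_of_triple_subset {x y z a : ℕ}
    (h : ({x, y, z} : Set ℕ) ⊆ {a, a + 1}) :
    (x = a ∨ x = a + 1) ∧ (y = a ∨ y = a + 1) ∧ (z = a ∨ z = a + 1) := by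
  simpa only [Set.insert_subset_iff, Set.singleton_subset_iff, Set.mem_insert_iff,
    Set.mem_singleton_iff] using h

theorem IsStarFreeColoring.extend_of_isIndepSet (f : H ↪g G) (hf : G.IsIndepSet (Set.range f)ᶜ)
    {c : W → ℕ} (hc : IsStarFreeColoring H c) {t : ℕ} (ht : ∀ w, c w ≤ t) :
    IsStarFreeColoring G (Function.extend f c fun _ => t + 2) := by
  set d := Function.extend f c fun _ => t + 2
  have hd_range (w : W) : d (f w) = c w := f.injective.extend_apply c _ w
  have hd_off (v : V) (hv : v ∉ Set.range f) : d v = t + 2 := Function.extend_apply' _ _ _ hv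
  have hfar (x y : V) (hxy : G.Adj x y) (hx : x ∉ Set.range f) : d y + 2 ≤ d x := by
    obtain ⟨y, rfl⟩ : y ∈ Set.range f := by_contra fun hy => hf hx hy hxy.ne hxy
    rw [hd_range, hd_off x hx]
    exact Nat.add_le_add_right (ht y) 2
  have hmem_range (x y : V) (hxy : G.Adj x y) (hxy' : d x ≤ d y + 1) (hyx : d y ≤ d x + 1) :
      x ∈ Set.range f ∧ y ∈ Set.range f := by
    refine ⟨by_contra fun hx => ?_, by_contra fun hy => ?_⟩
    · have := hfar x y hxy hx
      omega
    · have := hfar y x hxy.symm hy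
      omega
  refine ⟨fun v => ?_, fun x y hxy hd => ?_, ?_⟩
  · by_cases hv : v ∈ Set.range f
    · obtain ⟨v, rfl⟩ := hv
      exact (hd_range v).symm ▸ hc.1 v
    · exact (hd_off v hv).symm ▸ Nat.le_add_left 1 (t + 1)
  · obtain ⟨⟨x, rfl⟩, ⟨y, rfl⟩⟩ := hmem_range x y hxy (by omega) (by omega)
    rw [hd_range, hd_range] at hd
    exact hc.2.1 x y (f.map_adj_iff.1 hxy) hd
  · rintro v u w huw hvu hvw ⟨a, hsub⟩
    obtain ⟨hu, hv, hw⟩ := mem_consecutive_of_triple_subset hsub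
    obtain ⟨⟨v, rfl⟩, ⟨u, rfl⟩⟩ := hmem_range v u hvu (by omega) (by omega)
    obtain ⟨w, rfl⟩ := (hmem_range _ w hvw (by omega) (by omega)).2
    rw [hd_range, hd_range, hd_range] at hsub
    exact hc.2.2 v u w (f.injective.ne_iff.1 huw) (f.map_adj_iff.1 hvu) (f.map_adj_iff.1 hvw)
      ⟨a, hsub⟩

theorem IsStarFreeColoring.exists_extend_of_isIndepSet (f : H ↪g G)
    (hf : G.IsIndepSet (Set.range f)ᶜ) {c : W → ℕ} (hc : IsStarFreeColoring H c) {t : ℕ}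
    (ht : ∀ w, c w ∈ Set.Icc 1 t) :
    ∃ d : V → ℕ, IsStarFreeColoring G d ∧ (∀ v, d v ∈ Set.Icc 1 (t + 2)) ∧
      ∀ w, d (f w) = c w := by
  have hd := hc.extend_of_isIndepSet f hf fun w => (ht w).2
  refine ⟨_, hd, fun v => ⟨hd.1 v, ?_⟩, f.injective.extend_apply c _⟩
  by_cases hv : v ∈ Set.range f
  · obtain ⟨v, rfl⟩ := hv
    rw [f.injective.extend_apply]
    exact (ht v).2.trans (Nat.le_add_right t 2)
  · rw [Function.extend_apply' _ _ _ hv]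

theorem isStarFreeColoring_of_injective {e : V → ℕ} (he : Function.Injective e) :
    IsStarFreeColoring G fun v => 2 * e v + 1 := by
  refine ⟨fun v => Nat.le_add_left 1 _, fun u v huv h => huv.ne (he ?_), ?_⟩
  · simp only at h
    omega
  rintro v u w huw - - ⟨a, hsub⟩
  obtain ⟨hu, -, hw⟩ := mem_consecutive_of_triple_subset hsub
  have := he.ne huw
  simp only at hu hw
  omega

theorem exists_starFreeColoring [Finite V] (G : SimpleGraph V) :
    ∃ t, 0 < t ∧ ∃ c : V → ℕ, IsStarFreeColoring G c ∧ ∀ v, c v ∈ Set.Icc 1 t := by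
  obtain ⟨n, ⟨e⟩⟩ := Finite.exists_equiv_fin V
  refine ⟨2 * n + 1, Nat.succ_pos _, _,
    isStarFreeColoring_of_injective (Fin.val_injective.comp e.injective), fun v => ?_⟩
  have := (e v).isLt
  simp only [Function.comp_apply, Set.mem_Icc]
  omega

theorem starFreeChromaticNumber_spec [Finite V] (G : SimpleGraph V) :
    ∃ c : V → ℕ, IsStarFreeColoring G c ∧ ∀ v, c v ∈ Set.Icc 1 (starFreeChromaticNumber G) :=
  (Nat.sInf_mem (exists_starFreeColoring G)).2

theorem starFreeChromaticNumber_le {c : V → ℕ} (hc : IsStarFreeColoring G c) {t : ℕ} (ht : 0 < t)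
    (hct : ∀ v, c v ∈ Set.Icc 1 t) : starFreeChromaticNumber G ≤ t :=
  Nat.sInf_le ⟨ht, c, hc, hct⟩

theorem starFreeChromaticNumber_le_add_two_of_isIndepSet [Finite W] (f : H ↪g G)
    (hf : G.IsIndepSet (Set.range f)ᶜ) :
    starFreeChromaticNumber G ≤ starFreeChromaticNumber H + 2 := by
  obtain ⟨c, hc, hct⟩ := starFreeChromaticNumber_spec H
  obtain ⟨d, hd, hdt, -⟩ := hc.exists_extend_of_isIndepSet f hf hct
  exact starFreeChromaticNumber_le hd (Nat.succ_pos _) hdt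

end StarFree

section Kneser

def kneserGraphEmbedding (n k : ℕ) : kneserGraph (n - 1) k ↪g kneserGraph n k where
  toFun := kneserVertexEmb n k
  inj' _ _ h := Subtype.ext (Finset.map_injective _ (congrArg Subtype.val h))
  map_rel_iff' {A B} := by
    change (kneserGraph n k).Adj (kneserVertexEmb n k A) (kneserVertexEmb n k B) ↔ _
    simp only [kneserGraph, kneserVertexEmb, ne_eq, Finset.map_inj,
      Finset.disjoint_map, Subtype.ext_iff]

lemma exists_mem_val_eq_of_not_mem_range_kneserGraphEmbedding {n k : ℕ}
    {A : {A : Finset (Fin n) // A.card = k}} (hA : A ∉ Set.range (kneserGraphEmbedding n k)) :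
    ∃ x ∈ A.1, (x : ℕ) = n - 1 := by
  by_contra! h
  have hsub : A.1 ⊆ Finset.univ.map (Fin.castLEEmb (Nat.sub_le n 1)) := fun x hx =>
    Finset.mem_map.2 ⟨⟨x, lt_of_le_of_ne (Nat.le_sub_one_of_lt x.2) (h x hx)⟩,
      Finset.mem_univ _, rfl⟩
  obtain ⟨u, -, hu⟩ := Finset.subset_map_iff.1 hsub
  exact hA ⟨⟨u, by rw [← Finset.card_map, ← hu, A.2]⟩, Subtype.ext hu.symm⟩

lemma kneserGraph_isIndepSet_compl_range (n k : ℕ) :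
    (kneserGraph n k).IsIndepSet (Set.range (kneserGraphEmbedding n k))ᶜ := by
  intro A hA B hB _ hAB
  obtain ⟨x, hx, hxn⟩ := exists_mem_val_eq_of_not_mem_range_kneserGraphEmbedding hA
  obtain ⟨y, hy, hyn⟩ := exists_mem_val_eq_of_not_mem_range_kneserGraphEmbedding hB
  exact Finset.disjoint_left.1 hAB.2 hx (Fin.ext (hxn.trans hyn.symm) ▸ hy)

end Kneser

theorem starFree_kneser_succ_le_general (n k : ℕ) :
    starFreeChromaticNumber (kneserGraph n k) ≤
      starFreeChromaticNumber (kneserGraph (n - 1) k) + 2 ∧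
    ∀ (t : ℕ) (c' : {A : Finset (Fin (n - 1)) // A.card = k} → ℕ),
      IsStarFreeColoring (kneserGraph (n - 1) k) c' →
      (∀ A, c' A ∈ Set.Icc 1 t) →
      ∃ c : {A : Finset (Fin n) // A.card = k} → ℕ,
        IsStarFreeColoring (kneserGraph n k) c ∧
        (∀ A, c A ∈ Set.Icc 1 (t + 2)) ∧
        ∀ A, c (kneserVertexEmb n k A) = c' A :=
  ⟨starFreeChromaticNumber_le_add_two_of_isIndepSet _ (kneserGraph_isIndepSet_compl_range n k),
    fun _ _ hc' ht => hc'.exists_extend_of_isIndepSet _ (kneserGraph_isIndepSet_compl_range n k) ht⟩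

/-- For `n − 1 ≥ 2k ≥ 4`,
`χₛ(KG(n,k)) ≤ χₛ(KG(n−1,k)) + 2`; indeed any star-free coloring of `KG(n−1,k)`
with colors in `{1, …, t}` extends to a star-free coloring of `KG(n,k)` with
colors in `{1, …, t+2}`. -/
theorem starFree_kneser_succ_le (n k : ℕ) (hk : 0 < k) (hn : 0 < n)
    (h2k : 2 ≤ k) (hnk : 2 * k ≤ n - 1) :
    starFreeChromaticNumber (kneserGraph n k) ≤
      starFreeChromaticNumber (kneserGraph (n - 1) k) + 2 ∧
    ∀ (t : ℕ) (c' : {A : Finset (Fin (n - 1)) // A.card = k} → ℕ),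
      IsStarFreeColoring (kneserGraph (n - 1) k) c' →
      (∀ A, c' A ∈ Set.Icc 1 t) →
      ∃ c : {A : Finset (Fin n) // A.card = k} → ℕ,
        IsStarFreeColoring (kneserGraph n k) c ∧
        (∀ A, c A ∈ Set.Icc 1 (t + 2)) ∧
        ∀ A, c (kneserVertexEmb n k A) = c' A :=
  starFree_kneser_succ_le_general n k
end

section
/- Let n and k be positive integers with n ≥ 2k ≥ 4, let c be a star-free coloring of KG(n,k), let j be a positive integer, and let i ∈ {1,…,n}. Suppose the color class C_j = c⁻¹(j) has size at least C(n−1,k−1) − C(n−k−1,k−1) + 2 and every vertex A ∈ C_j satisfies i ∈ A. Then every vertex B with c(B) = j − 1 or c(B) = j + 1 also satisfies i ∈ B; in particular the set of vertices colored j−1, j or j+1 induces an edgeless subgraph of KG(n,k). -/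
open Finset

lemma Finset.card_filter_mem_not_disjoint_powersetCard {α : Type*} [DecidableEq α]
    {k : ℕ} (hk : 1 ≤ k) {a : α} {s B : Finset α} (has : a ∈ s) (haB : a ∉ B) :
    #{t ∈ powersetCard k s | a ∈ t ∧ ¬Disjoint t B} =
      (#s - 1).choose (k - 1) - (#(s \ B) - 1).choose (k - 1) := by
  have hsplit : {t ∈ powersetCard k s | a ∈ t ∧ ¬Disjoint t B} =
      {t ∈ powersetCard k s | {a} ⊆ t} \ {t ∈ powersetCard k (s \ B) | {a} ⊆ t} := by
    ext t
    simp only [mem_filter, mem_sdiff, mem_powersetCard, singleton_subset_iff, subset_sdiff,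
      disjoint_comm (a := t)]
    tauto
  have hsub : {t ∈ powersetCard k (s \ B) | {a} ⊆ t} ⊆ {t ∈ powersetCard k s | {a} ⊆ t} :=
    filter_subset_filter _ (powersetCard_mono sdiff_subset)
  rw [hsplit, card_sdiff_of_subset hsub,
    card_filter_powersetCard_subset {a} s k (by simpa using has) (by simpa using hk),
    card_filter_powersetCard_subset {a} (s \ B) k (by simpa using ⟨has, haB⟩) (by simpa using hk),
    card_singleton]

theorem IsStarFreeColoring.eq_of_adj_of_adj {V : Type*} {G : SimpleGraph V} {c : V → ℕ}
    (hc : IsStarFreeColoring G c) {v u w : V} {j : ℕ} (hv : c v = j - 1 ∨ c v = j + 1)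
    (hu : G.Adj v u) (hw : G.Adj v w) (hcu : c u = j) (hcw : c w = j) : u = w := by
  by_contra huw
  refine hc.2.2 v u w huw hu hw ⟨if c v = j - 1 then j - 1 else j, ?_⟩
  intro x hx
  simp only [Set.mem_insert_iff, Set.mem_singleton_iff] at hx ⊢
  split_ifs <;> omega

theorem kneserGraph.ncard_setOf_mem_not_disjoint {n k : ℕ} (hk : 0 < k) {i : Fin n}
    (B : {B : Finset (Fin n) // B.card = k}) (hi : i ∉ (B : Finset (Fin n))) :
    {A : {A : Finset (Fin n) // A.card = k} |
        i ∈ (A : Finset (Fin n)) ∧ ¬Disjoint (A : Finset (Fin n)) B}.ncard =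
      (n - 1).choose (k - 1) - (n - k - 1).choose (k - 1) := by
  have hpre : {A : {A : Finset (Fin n) // A.card = k} |
        i ∈ (A : Finset (Fin n)) ∧ ¬Disjoint (A : Finset (Fin n)) B} =
      Subtype.val ⁻¹'
        ↑{t ∈ powersetCard k (univ : Finset (Fin n)) | i ∈ t ∧ ¬Disjoint t (B : Finset (Fin n))} := by
    ext A
    simp [A.2]
  rw [hpre, Set.ncard_preimage_of_injective_subset_range Subtype.val_injective,
    Set.ncard_coe_finset,
    card_filter_mem_not_disjoint_powersetCard hk (mem_univ i) hi, card_univ_sdiff,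
    card_univ, Fintype.card_fin, B.2]
  intro t ht
  simp only [coe_filter, mem_powersetCard] at ht
  exact ⟨⟨t, ht.1.2⟩, rfl⟩

theorem kneserGraph.mem_of_starFree_color_adjacent {n k : ℕ} (hk : 0 < k)
    {c : {A : Finset (Fin n) // A.card = k} → ℕ} (hc : IsStarFreeColoring (kneserGraph n k) c)
    {j : ℕ} {i : Fin n}
    (hsize : (n - 1).choose (k - 1) - (n - k - 1).choose (k - 1) + 2 ≤
      {A : {A : Finset (Fin n) // A.card = k} | c A = j}.ncard)
    (hi : ∀ A, c A = j → i ∈ (A : Finset (Fin n)))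
    (B : {B : Finset (Fin n) // B.card = k}) (hB : c B = j - 1 ∨ c B = j + 1) :
    i ∈ (B : Finset (Fin n)) := by
  by_contra hiB
  have hadj : ∀ A, c A = j → Disjoint (A : Finset (Fin n)) B → (kneserGraph n k).Adj B A :=
    fun A hA hAB => ⟨fun h => hiB (h ▸ hi A hA), hAB.symm⟩
  have hcover : {A | c A = j} ⊆ {A : {A : Finset (Fin n) // A.card = k} |
      i ∈ (A : Finset (Fin n)) ∧ ¬Disjoint (A : Finset (Fin n)) B} ∪
      {A | c A = j ∧ Disjoint (A : Finset (Fin n)) B} := fun A hA => by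
    by_cases hAB : Disjoint (A : Finset (Fin n)) B
    · exact Or.inr ⟨hA, hAB⟩
    · exact Or.inl ⟨hi A hA, hAB⟩
  have hdisjoint : {A | c A = j ∧ Disjoint (A : Finset (Fin n)) B}.ncard ≤ 1 :=
    (Set.ncard_le_one_iff).2 fun hA hA' =>
      hc.eq_of_adj_of_adj hB (hadj _ hA.1 hA.2) (hadj _ hA'.1 hA'.2) hA.1 hA'.1
  have hbound := (Set.ncard_le_ncard hcover).trans (Set.ncard_union_le _ _)
  rw [kneserGraph.ncard_setOf_mem_not_disjoint hk B hiB] at hbound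
  omega

theorem starFree_neighboring_classes_share_element_general (n k : ℕ) (hk : 0 < k)
    (c : {A : Finset (Fin n) // A.card = k} → ℕ)
    (hc : IsStarFreeColoring (kneserGraph n k) c)
    (j : ℕ) (i : Fin n)
    (hsize : (n - 1).choose (k - 1) - (n - k - 1).choose (k - 1) + 2 ≤
      {A : {A : Finset (Fin n) // A.card = k} | c A = j}.ncard)
    (hi : ∀ A, c A = j → i ∈ (A : Finset (Fin n))) :
    (∀ B, (c B = j - 1 ∨ c B = j + 1) → i ∈ (B : Finset (Fin n))) ∧
    (∀ A B, (c A = j - 1 ∨ c A = j ∨ c A = j + 1) →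
      (c B = j - 1 ∨ c B = j ∨ c B = j + 1) → ¬ (kneserGraph n k).Adj A B) := by
  have hneighbor := kneserGraph.mem_of_starFree_color_adjacent hk hc hsize hi
  have hmem : ∀ A, (c A = j - 1 ∨ c A = j ∨ c A = j + 1) → i ∈ (A : Finset (Fin n)) := by
    rintro A (hA | hA | hA)
    exacts [hneighbor A (Or.inl hA), hi A hA, hneighbor A (Or.inr hA)]
  exact ⟨hneighbor, fun A B hA hB hAB => disjoint_left.1 hAB.2 (hmem A hA) (hmem B hB)⟩

/-- Let `c` be a star-free coloring of `KG(n,k)` with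
`n ≥ 2k ≥ 4`, let `j ≥ 1`, and suppose the color class `c⁻¹(j)` has size at
least `C(n−1,k−1) − C(n−k−1,k−1) + 2` and all its members contain `i`. Then
every vertex colored `j − 1` or `j + 1` also contains `i`; in particular the
vertices colored `j−1`, `j` or `j+1` induce an edgeless subgraph. -/
theorem starFree_neighboring_classes_share_element (n k : ℕ) (hk : 0 < k) (hn : 0 < n)
    (h2k : 2 ≤ k) (hnk : 2 * k ≤ n)
    (c : {A : Finset (Fin n) // A.card = k} → ℕ)
    (hc : IsStarFreeColoring (kneserGraph n k) c)
    (j : ℕ) (hj : 1 ≤ j) (i : Fin n)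
    (hsize : (n - 1).choose (k - 1) - (n - k - 1).choose (k - 1) + 2 ≤
      {A : {A : Finset (Fin n) // A.card = k} | c A = j}.ncard)
    (hi : ∀ A, c A = j → i ∈ (A : Finset (Fin n))) :
    (∀ B, (c B = j - 1 ∨ c B = j + 1) → i ∈ (B : Finset (Fin n))) ∧
    (∀ A B, (c A = j - 1 ∨ c A = j ∨ c A = j + 1) →
      (c B = j - 1 ∨ c B = j ∨ c B = j + 1) → ¬ (kneserGraph n k).Adj A B) :=
  starFree_neighboring_classes_share_element_general n k hk c hc j i hsize hi
end

section
/- For all integers n and k with k ≥ 3 and n ≥ 2k, C(n−1,k−1) − C(n−k−1,k−1) + 2 ≤ k · C(n−2,k−2). -/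
/-! The difference `C(n-1,k-1) - C(n-k-1,k-1)` telescopes by Pascal's rule into the `k` terms
`C(n-2,k-2), C(n-3,k-2), …, C(n-k-1,k-2)`. Each is at most `C(n-2,k-2)`, and all but the first
are strictly smaller, so the sum is at most `k·C(n-2,k-2) - (k-1)`, and `k - 1 ≥ 2`. -/

namespace Nat

theorem choose_lt_choose_of_lt {a b r : ℕ} (hr : 0 < r) (hra : r ≤ a) (hab : a < b) :
    a.choose r < b.choose r := by
  obtain ⟨s, rfl⟩ : ∃ s, r = s + 1 := ⟨r - 1, by omega⟩
  have hpos : 0 < a.choose s := choose_pos (by omega)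
  calc a.choose (s + 1) < a.choose s + a.choose (s + 1) := by omega
    _ = (a + 1).choose (s + 1) := (choose_succ_succ a s).symm
    _ ≤ b.choose (s + 1) := choose_le_choose _ hab

theorem choose_add_eq_choose_add_sum (a r s : ℕ) :
    (a + s).choose (r + 1) = a.choose (r + 1) + ∑ j ∈ Finset.range s, (a + j).choose r := by
  induction s with
  | zero => simp
  | succ s ih =>
    rw [← add_assoc, choose_succ_succ', ih, Finset.sum_range_succ]
    ring

theorem sum_range_choose_add_add_le (a r s : ℕ) (hr : 0 < r) (hra : r ≤ a) :
    ∑ j ∈ Finset.range (s + 1), (a + j).choose r + s ≤ (s + 1) * (a + s).choose r := by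
  have hlt : ∀ j ∈ Finset.range s, (a + j).choose r + 1 ≤ (a + s).choose r := fun j hj =>
    choose_lt_choose_of_lt hr (by omega) (by simpa using hj)
  calc ∑ j ∈ Finset.range (s + 1), (a + j).choose r + s
      = ∑ j ∈ Finset.range s, ((a + j).choose r + 1) + (a + s).choose r := by
        rw [Finset.sum_range_succ, Finset.sum_add_distrib, Finset.sum_const, Finset.card_range,
          smul_eq_mul, mul_one]
        ring
    _ ≤ s * (a + s).choose r + (a + s).choose r := by
        gcongr
        simpa using Finset.sum_le_card_nsmul _ _ _ hlt
    _ = (s + 1) * (a + s).choose r := by ring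

end Nat

/-- For `k ≥ 3` and `n ≥ 2k`,
`C(n−1,k−1) − C(n−k−1,k−1) + 2 ≤ k·C(n−2,k−2)`. -/
theorem choose_diff_le_k_mul_choose (n k : ℕ) (hk : 3 ≤ k) (hnk : 2 * k ≤ n) :
    ((n - 1).choose (k - 1) : ℤ) - ((n - k - 1).choose (k - 1) : ℤ) + 2 ≤
      (k : ℤ) * ((n - 2).choose (k - 2) : ℤ) := by
  have htelescope := Nat.choose_add_eq_choose_add_sum (n - k - 1) (k - 2) k
  have hbound := Nat.sum_range_choose_add_add_le (n - k - 1) (k - 2) (k - 1) (by omega) (by omega)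
  rw [show n - k - 1 + k = n - 1 by omega, show k - 2 + 1 = k - 1 by omega] at htelescope
  rw [show k - 1 + 1 = k by omega, show n - k - 1 + (k - 1) = n - 2 by omega] at hbound
  have hnat : (n - 1).choose (k - 1) + (k - 1) ≤
      (n - k - 1).choose (k - 1) + k * (n - 2).choose (k - 2) := by
    omega
  zify [show 1 ≤ k by omega] at hnat
  linarith
end
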